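/- Let p be a prime and n ≥ 2, and let T = Tr(Z_{p^n}). Let A = [[p^r·α, 0],[0,0]] where 1 ≤ r ≤ n−1 and α is a unit of Z_{p^n}. Then the annihilator of p^r·α in Z_{p^n} is the ideal generated by p^{n−r}, and the neighbourhood of A in Γ(T) is {[[a,b],[0,c]] : a,c ∈ Z_{p^n}, b ∈ (p^{n−r}), B ≠ aI, B ≠ A}, which has cardinality p^{2n+r} − p^n − 1. -/

import Mathlib

/-!
An upper triangular matrix `[[a, b], [0, c]]` commutes with `diag(d, 0)` exactly when `d * b = 0`,
so the neighbourhood of `A = diag(d, 0)` consists of the matrices whose corner entry lies in the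
annihilator of `d`, minus the scalar matrices and `A` itself. In `ℤ/p^n` the annihilator of
`p^r α` is `(p^(n-r))`, the kernel of reduction modulo `p^(n-r)`, so it has `p^r` elements and
the count is `p^n · p^r · p^n - p^n - 1`.
-/

open Matrix

/-- The ring of 2×2 upper triangular matrices over `R`. -/
def Tri (R : Type*) [CommRing R] : Subring (Matrix (Fin 2) (Fin 2) R) where
  carrier := {A | A 1 0 = 0}
  mul_mem' := by
    intro a b ha hb
    simp only [Set.mem_setOf_eq] at *
    simp [Matrix.mul_apply, Fin.sum_univ_two, ha, hb]
  one_mem' := by simp [Matrix.one_apply]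
  add_mem' := by
    intro a b ha hb
    simp_all [Matrix.add_apply]
  zero_mem' := by simp
  neg_mem' := by
    intro a ha
    simp_all

/-- The commuting graph of a ring `T`: vertices are the noncentral elements,
two distinct vertices are adjacent iff they commute. -/
def commGraph (T : Type*) [Ring T] : SimpleGraph {x : T // x ∉ Set.center T} where
  Adj a b := a ≠ b ∧ (a : T) * b = b * a
  symm := by
    constructor
    rintro a b ⟨h1, h2⟩
    exact ⟨h1.symm, h2.symm⟩
  loopless := by constructor; rintro a ⟨h, _⟩; exact h rfl

namespace ZMod

variable {m b : ℕ} [NeZero m]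

theorem mem_span_natCast_iff_dvd_val (hb : b ∣ m) (s : ZMod m) :
    s ∈ Ideal.span {(b : ZMod m)} ↔ b ∣ s.val := by
  rw [Ideal.mem_span_singleton]
  constructor
  · rintro ⟨t, rfl⟩
    rw [← natCast_zmod_val t, ← Nat.cast_mul, val_natCast]
    exact (Nat.dvd_mod_iff hb).mpr (dvd_mul_right _ _)
  · rintro ⟨k, hk⟩
    exact ⟨k, by rw [← natCast_zmod_val s, hk, Nat.cast_mul]⟩

theorem mul_natCast_eq_zero_iff {a : ℕ} (h : b * a = m) (s : ZMod m) :
    s * a = 0 ↔ s ∈ Ideal.span {(b : ZMod m)} := by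
  have ha : 0 < a := Nat.pos_of_ne_zero (right_ne_zero_of_mul (h ▸ NeZero.ne m))
  rw [mem_span_natCast_iff_dvd_val (h ▸ dvd_mul_right b a), ← natCast_zmod_val s,
    ← Nat.cast_mul, natCast_eq_zero_iff, val_natCast_of_lt (val_lt s)]
  generalize s.val = v
  rw [← h, Nat.mul_dvd_mul_iff_right ha]

theorem card_span_natCast (hb : b ∣ m) :
    Nat.card (Ideal.span {(b : ZMod m)}) = m / b := by
  let f := (castHom hb (ZMod b)).toAddMonoidHom
  have hker : (Ideal.span {(b : ZMod m)}).toAddSubgroup = f.ker := by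
    ext s
    change s ∈ Ideal.span _ ↔ castHom hb (ZMod b) s = 0
    rw [castHom_apply, cast_eq_val, natCast_eq_zero_iff, mem_span_natCast_iff_dvd_val hb]
  have hrange : Nat.card f.range = b := by
    rw [AddMonoidHom.range_eq_top.mpr (castHom_surjective hb), AddSubgroup.card_top, Nat.card_zmod]
  have key := f.ker.card_mul_index
  rw [AddSubgroup.index_ker, hrange, ← hker, Nat.card_zmod] at key
  have hb0 : 0 < b := Nat.pos_of_dvd_of_pos hb (Nat.pos_of_ne_zero (NeZero.ne m))
  exact (Nat.div_eq_of_eq_mul_left hb0 key.symm).symm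

end ZMod

namespace Tri

variable {R : Type*} [CommRing R]

def mk (a b c : R) : Tri R := ⟨!![a, b; 0, c], rfl⟩

@[simp]
lemma coe_mk (a b c : R) : (mk a b c : Matrix (Fin 2) (Fin 2) R) = !![a, b; 0, c] := rfl

lemma eq_mk (B : Tri R) : B = mk (B.1 0 0) (B.1 0 1) (B.1 1 1) := by
  apply Subtype.ext
  rw [coe_mk, ← show B.1 1 0 = 0 from B.2]
  exact eta_fin_two _

lemma mk_inj {a b c a' b' c' : R} : mk a b c = mk a' b' c' ↔ a = a' ∧ b = b' ∧ c = c' := by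
  rw [Subtype.ext_iff, coe_mk, coe_mk, ← Matrix.ext_iff]
  simp [Fin.forall_fin_two, and_assoc]

@[simp]
lemma mk_mul_mk (a b c a' b' c' : R) :
    mk a b c * mk a' b' c' = mk (a * a') (a * b' + b * c') (c * c') := by
  apply Subtype.ext
  simp

lemma mem_center_iff (B : Tri R) : B ∈ Set.center (Tri R) ↔ ∃ a, B = mk a 0 a := by
  rw [Semigroup.mem_center_iff, eq_mk B]
  generalize B.1 0 0 = x, B.1 0 1 = y, B.1 1 1 = z
  constructor
  · intro h
    have hE01 := h (mk 0 1 0)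
    have hE00 := h (mk 1 0 0)
    simp only [mk_mul_mk, mk_inj, mul_zero, zero_mul, mul_one, one_mul, add_zero, zero_add]
      at hE01 hE00
    exact ⟨x, by rw [hE00.2.1, ← hE01.2.1]⟩
  · rintro ⟨a, h⟩ g
    rw [h, eq_mk g, mk_mul_mk, mk_mul_mk, mk_inj]
    exact ⟨mul_comm _ _, by ring, mul_comm _ _⟩

lemma card_center : Nat.card (Set.center (Tri R)) = Nat.card R := by
  have hcenter : Set.center (Tri R) = Set.range (fun a : R => mk a 0 a) := by
    ext B; rw [mem_center_iff, Set.mem_range]; simp only [eq_comm]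
  rw [hcenter, Nat.card_range_of_injective]
  intro a a' h
  exact (mk_inj.mp h).1

lemma card_setOf_mem (S : Set R) :
    Nat.card {B : Tri R | B.1 0 1 ∈ S} = Nat.card R * Nat.card S * Nat.card R := by
  let e : R × S × R ≃ {B : Tri R | B.1 0 1 ∈ S} :=
    { toFun x := ⟨mk x.1 x.2.1 x.2.2, x.2.1.2⟩
      invFun B := (B.1.1 0 0, ⟨B.1.1 0 1, B.2⟩, B.1.1 1 1)
      left_inv x := rfl
      right_inv B := Subtype.ext (eq_mk B.1).symm }
  rw [← Nat.card_congr e, Nat.card_prod, Nat.card_prod, mul_assoc]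

lemma exists_coe_eq_iff (P : R → Prop) (B : Tri R) :
    (∃ a b c, P b ∧ B.1 = !![a, b; 0, c]) ↔ P (B.1 0 1) := by
  refine ⟨?_, fun h => ⟨_, _, _, h, congrArg Subtype.val (eq_mk B)⟩⟩
  rintro ⟨a, b, c, hb, hB⟩
  simpa [hB] using hb

lemma mk_mul_comm_iff (d : R) (B : Tri R) :
    mk d 0 0 * B = B * mk d 0 0 ↔ d * B.1 0 1 = 0 := by
  rw [eq_mk B, mk_mul_mk, mk_mul_mk, mk_inj]
  simp [mul_comm]

lemma card_neighbourhood_mk [Finite R] {d : R} (hd : d ≠ 0) :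
    Nat.card
        {B : Tri R | mk d 0 0 * B = B * mk d 0 0 ∧ B ≠ mk d 0 0 ∧ B ∉ Set.center (Tri R)} =
      Nat.card R ^ 2 * Nat.card {s : R | s * d = 0} - Nat.card R - 1 := by
  have hA_center : mk d 0 0 ∉ Set.center (Tri R) := by
    rw [mem_center_iff]
    rintro ⟨a, h⟩
    obtain ⟨hda, -, h0a⟩ := mk_inj.mp h
    exact hd (hda.trans h0a.symm)
  have hsub : insert (mk d 0 0) (Set.center (Tri R)) ⊆ {B | B.1 0 1 ∈ {s | s * d = 0}} := by
    rintro B (rfl | hB)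
    · simp
    · obtain ⟨a, rfl⟩ := (mem_center_iff B).mp hB
      simp
  have hset :
      {B : Tri R | mk d 0 0 * B = B * mk d 0 0 ∧ B ≠ mk d 0 0 ∧ B ∉ Set.center (Tri R)} =
      {B | B.1 0 1 ∈ {s | s * d = 0}} \ insert (mk d 0 0) (Set.center (Tri R)) := by
    ext B
    simp only [Set.mem_ofPred_eq, Set.mem_sdiff, Set.mem_insert_iff, mk_mul_comm_iff,
      mul_comm d]
    tauto
  rw [hset, Nat.card_coe_set_eq, Set.ncard_sdiff hsub (Set.toFinite _),
    Set.ncard_insert_of_notMem hA_center (Set.toFinite _), ← Nat.card_coe_set_eq,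
    ← Nat.card_coe_set_eq, card_center, card_setOf_mem,
    mul_right_comm, ← sq, Nat.sub_sub]

end Tri

theorem neighbourhood_tri_zmod_ppow_general (p n r : ℕ) (hp : p.Prime) (hn : 2 ≤ n)
    (hr2 : r ≤ n - 1) (α : (ZMod (p ^ n))ˣ)
    (A : Tri (ZMod (p ^ n)))
    (hA : (A : Matrix (Fin 2) (Fin 2) (ZMod (p ^ n))) =
      !![(p : ZMod (p ^ n)) ^ r * (α : ZMod (p ^ n)), 0; 0, 0]) :
    ({s : ZMod (p ^ n) | s * ((p : ZMod (p ^ n)) ^ r * (α : ZMod (p ^ n))) = 0} =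
        (Ideal.span {(p : ZMod (p ^ n)) ^ (n - r)} : Ideal (ZMod (p ^ n)))) ∧
    ({B : Tri (ZMod (p ^ n)) | A * B = B * A ∧ B ≠ A ∧
        B ∉ Set.center (Tri (ZMod (p ^ n)))} =
      {B : Tri (ZMod (p ^ n)) | (∃ a b c : ZMod (p ^ n),
          b ∈ Ideal.span {(p : ZMod (p ^ n)) ^ (n - r)} ∧
          (B : Matrix (Fin 2) (Fin 2) (ZMod (p ^ n))) = !![a, b; 0, c]) ∧
        B ∉ Set.center (Tri (ZMod (p ^ n))) ∧ B ≠ A}) ∧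
    Nat.card {B : Tri (ZMod (p ^ n)) | A * B = B * A ∧ B ≠ A ∧
        B ∉ Set.center (Tri (ZMod (p ^ n)))} =
      p ^ (2 * n + r) - p ^ n - 1 := by
  have : NeZero (p ^ n) := ⟨pow_ne_zero _ hp.ne_zero⟩
  obtain rfl : A = Tri.mk _ 0 0 := Subtype.ext hA
  have hrn : r < n := by omega
  have hpow : p ^ (n - r) * p ^ r = p ^ n := by rw [← pow_add, Nat.sub_add_cancel hrn.le]
  have hann : {s : ZMod (p ^ n) | s * ((p : ZMod (p ^ n)) ^ r * (α : ZMod (p ^ n))) = 0} =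
      (Ideal.span {(p : ZMod (p ^ n)) ^ (n - r)} : Ideal (ZMod (p ^ n))) := by
    ext s
    have h := ZMod.mul_natCast_eq_zero_iff hpow s
    push_cast at h
    rw [Set.mem_ofPred_eq, ← mul_assoc, Units.mul_left_eq_zero, h, SetLike.mem_coe]
  have hd : (p : ZMod (p ^ n)) ^ r * (α : ZMod (p ^ n)) ≠ 0 := by
    rw [Ne, Units.mul_left_eq_zero, ← Nat.cast_pow, ZMod.natCast_eq_zero_iff,
      Nat.pow_dvd_pow_iff_le_right hp.one_lt]
    omega
  have hcard_span : Nat.card (Ideal.span {(p : ZMod (p ^ n)) ^ (n - r)}) = p ^ r := by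
    have h := ZMod.card_span_natCast (m := p ^ n) (Dvd.intro _ hpow)
    push_cast at h
    rw [h, ← hpow, Nat.mul_div_cancel_left _ (pow_pos hp.pos _)]
  refine ⟨hann, ?_, ?_⟩
  · ext B
    simp only [Set.mem_ofPred_eq, ← SetLike.mem_coe, ← hann, Tri.exists_coe_eq_iff,
      Tri.mk_mul_comm_iff, mul_comm _ (B.1 0 1)]
    tauto
  · rw [Tri.card_neighbourhood_mk hd, hann, SetLike.coe_sort_coe, hcard_span,
      Nat.card_zmod, ← pow_mul, ← pow_add, mul_comm n 2]

/-- Corollary 2.8(i), key step: over `ℤ/p^n` (`p` prime, `n ≥ 2`), for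
`A = [[p^r α, 0],[0,0]]` with `1 ≤ r ≤ n-1` and `α` a unit, the annihilator of
`p^r α` is the ideal `(p^{n-r})`, the neighbourhood of `A` in the commuting
graph of `Tri (ZMod (p^n))` consists of the matrices `[[a,b],[0,c]]` with
`b ∈ (p^{n-r})`, excluding central matrices and `A` itself, and it has
cardinality `p^{2n+r} - p^n - 1`. -/
theorem neighbourhood_tri_zmod_ppow (p n r : ℕ) (hp : p.Prime) (hn : 2 ≤ n)
    (hr1 : 1 ≤ r) (hr2 : r ≤ n - 1) (α : (ZMod (p ^ n))ˣ)
    (A : Tri (ZMod (p ^ n)))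
    (hA : (A : Matrix (Fin 2) (Fin 2) (ZMod (p ^ n))) =
      !![(p : ZMod (p ^ n)) ^ r * (α : ZMod (p ^ n)), 0; 0, 0]) :
    ({s : ZMod (p ^ n) | s * ((p : ZMod (p ^ n)) ^ r * (α : ZMod (p ^ n))) = 0} =
        (Ideal.span {(p : ZMod (p ^ n)) ^ (n - r)} : Ideal (ZMod (p ^ n)))) ∧
    ({B : Tri (ZMod (p ^ n)) | A * B = B * A ∧ B ≠ A ∧
        B ∉ Set.center (Tri (ZMod (p ^ n)))} =
      {B : Tri (ZMod (p ^ n)) | (∃ a b c : ZMod (p ^ n),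
          b ∈ Ideal.span {(p : ZMod (p ^ n)) ^ (n - r)} ∧
          (B : Matrix (Fin 2) (Fin 2) (ZMod (p ^ n))) = !![a, b; 0, c]) ∧
        B ∉ Set.center (Tri (ZMod (p ^ n))) ∧ B ≠ A}) ∧
    Nat.card {B : Tri (ZMod (p ^ n)) | A * B = B * A ∧ B ≠ A ∧
        B ∉ Set.center (Tri (ZMod (p ^ n)))} =
      p ^ (2 * n + r) - p ^ n - 1 :=
  neighbourhood_tri_zmod_ppow_general p n r hp hn hr2 α A hA
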